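/- With the tower of the previous statement (a_k = exp(−8^{l+1}) for 8^l ≤ k < 8^{l+1}) and the same ψ, one has {x ∈ (0,1] : (1/(2·8^l)) S_{2·8^l} ψ(x,0) ≥ 1/2} ⊇ (0, a_{8^l}] for every l ≥ 0, and hence limsup_{n→∞} (1/n) log m({x : (1/n) S_n ψ(x,0) ≥ 1/2}) ≥ −4. Together with the previous statement, no function q_ψ can satisfy both the lower large deviation bound with level 7/16 and the upper bound with level 1/2, so the large deviations estimates of Theorem 1 fail for this tower even though a_k decays exponentially. -/

import Mathlib

open scoped Classical

open MeasureTheory Real Filter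

/-- Birkhoff sum along `T`. -/
noncomputable def birkhoffSum' {Z : Type*} (T : Z → Z) (ψ : Z → ℝ) (n : ℕ) (z : Z) : ℝ :=
  ∑ i ∈ Finset.range n, ψ (T^[i] z)

/-!
Starting from the base, an orbit climbs the tower until it first reaches a height `k` with
`a k < x`, and then restarts from the base. Since `a` is constant on the blocks
`[8^l, 8^(l+1))`, such a `k` is always a power of `8`. Points of `(0, a (8^l)]` climb past height
`2·8^l`, so they spend half of their first `2·8^l` steps at heights where `ψ = 1`, and
`log a (8^l) = -8^(l+1) = -4·(2·8^l)`. On the other hand, a completed climb to height `8^j`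
collects only `(8^j - 1)/7` ones, and an incomplete climb to height `t ≤ 8^(l+1)` at most
`(t + 6·8^l)/7`. So at time `8^(l+1)` every average is at most `1/4 < 7/16`: the set at level
`7/16` is empty and the liminf is `-∞`.
-/

theorem birkhoffSum'_eq_birkhoffSum {Z : Type*} :
    (birkhoffSum' : (Z → Z) → (Z → ℝ) → ℕ → Z → ℝ) = birkhoffSum :=
  rfl

open scoped ENNReal in
theorem le_limsup_log_div_of_frequently {u : ℕ → ℝ≥0∞} {c : ℝ}
    (h : ∃ᶠ n : ℕ in atTop, ENNReal.ofReal (Real.exp (-(c * n))) ≤ u n) :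
    -(c : EReal) ≤ limsup (fun n : ℕ => ENNReal.log (u n) / (n : EReal)) atTop := by
  refine le_limsup_of_frequently_le' ((h.and_eventually (eventually_gt_atTop 0)).mono
    fun n ⟨hn, hpos⟩ => ?_)
  have hlog : ((-(c * n) : ℝ) : EReal) ≤ ENNReal.log (u n) := by
    calc ((-(c * n) : ℝ) : EReal) = ENNReal.log (ENNReal.ofReal (Real.exp (-(c * n)))) := by
          rw [ENNReal.log_ofReal_of_pos (Real.exp_pos _), Real.log_exp]
      _ ≤ ENNReal.log (u n) := ENNReal.log_monotone hn
  calc -(c : EReal) = ((-(c * n) : ℝ) : EReal) / (n : EReal) := by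
        rw [← EReal.coe_coe_eq_natCast, ← EReal.coe_div, ← EReal.coe_neg]
        congr 1
        field_simp
    _ ≤ ENNReal.log (u n) / (n : EReal) :=
        EReal.div_le_div_right_of_nonneg (by exact_mod_cast (Nat.zero_le n)) hlog

open scoped ENNReal in
theorem liminf_log_div_eq_bot_of_frequently_eq_zero {u : ℕ → ℝ≥0∞}
    (h : ∃ᶠ n in atTop, u n = 0) :
    liminf (fun n : ℕ => ENNReal.log (u n) / (n : EReal)) atTop = ⊥ :=
  le_bot_iff.1 <| liminf_le_of_frequently_le' <|
    (h.and_eventually (eventually_gt_atTop 0)).mono fun n ⟨hn, hpos⟩ => by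
      rw [hn, ENNReal.log_zero, EReal.bot_div_of_pos_ne_top (by exact_mod_cast hpos)
        (EReal.natCast_ne_top n)]

def IsTowerMap (a : ℕ → ℝ) (T : ℝ × ℕ → ℝ × ℕ) : Prop :=
  ∀ x : ℝ, ∀ k : ℕ, T (x, k) =
    if x ≤ a (k + 1) then (x, k + 1) else ((x - a (k + 1)) / (a k - a (k + 1)), 0)

namespace IsTowerMap

variable {a : ℕ → ℝ} {T : ℝ × ℕ → ℝ × ℕ} {ψ : ℝ × ℕ → ℝ} {χ : ℕ → ℝ} {x : ℝ}

theorem iterate_zero_of_forall_le (hT : IsTowerMap a T) {n : ℕ}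
    (h : ∀ m < n, x ≤ a (m + 1)) : T^[n] (x, 0) = (x, n) := by
  induction n with
  | zero => rfl
  | succ n ih =>
    rw [Function.iterate_succ_apply', ih fun m hm => h m (by omega), hT,
      if_pos (h n n.lt_succ_self)]

theorem iterate_zero_of_forall_le_of_lt (hT : IsTowerMap a T) {j : ℕ}
    (h : ∀ m < j, x ≤ a (m + 1)) (hj : a (j + 1) < x) :
    T^[j + 1] (x, 0) = ((x - a (j + 1)) / (a j - a (j + 1)), 0) := by
  rw [Function.iterate_succ_apply', hT.iterate_zero_of_forall_le h, hT, if_neg hj.not_ge]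

theorem birkhoffSum_zero_of_forall_le (hT : IsTowerMap a T) (hψ : ∀ x k, ψ (x, k) = χ k)
    {n : ℕ} (h : ∀ m, m + 1 < n → x ≤ a (m + 1)) :
    birkhoffSum T ψ n (x, 0) = ∑ i ∈ Finset.range n, χ i :=
  Finset.sum_congr rfl fun i hi => by
    rw [hT.iterate_zero_of_forall_le fun m hm => h m (by simp at hi; omega), hψ]

theorem mul_birkhoffSum_le (hT : IsTowerMap a T) (hψ : ∀ x k, ψ (x, k) = χ k)
    (ha0 : 1 ≤ a 0) {c B : ℝ} {N : ℕ}
    (hdrop : ∀ j < N, a (j + 1) < a j → c * ∑ i ∈ Finset.range (j + 1), χ i ≤ (j + 1 : ℕ))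
    (hclimb : ∀ t ≤ N, c * ∑ i ∈ Finset.range t, χ i ≤ t + B) :
    ∀ n ≤ N, ∀ x ≤ 1, c * birkhoffSum T ψ n (x, 0) ≤ n + B := by
  intro n
  induction n using Nat.strong_induction_on with
  | _ n ih =>
  intro hn x hx
  by_cases hstay : ∀ m < n, x ≤ a (m + 1)
  · rw [hT.birkhoffSum_zero_of_forall_le hψ fun m hm => hstay m (by omega)]
    exact hclimb n hn
  push Not at hstay
  have hfall : ∃ j, a (j + 1) < x := hstay.imp fun _ => And.right
  set j := Nat.find hfall
  have hj : a (j + 1) < x := Nat.find_spec hfall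
  have hbelow : ∀ m < j, x ≤ a (m + 1) := fun m hm => not_lt.1 (Nat.find_min hfall hm)
  have hjn : j < n := (Nat.find_min' hfall hstay.choose_spec.2).trans_lt hstay.choose_spec.1
  have hxj : x ≤ a j := by
    rcases Nat.eq_zero_or_pos j with h0 | h0
    · rw [h0]; exact hx.trans ha0
    · simpa [Nat.sub_add_cancel h0] using hbelow (j - 1) (by omega)
  set x' := (x - a (j + 1)) / (a j - a (j + 1))
  have hx' : x' ≤ 1 := (div_le_one (by linarith)).2 (by linarith)
  have hsplit : birkhoffSum T ψ n (x, 0) =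
      ∑ i ∈ Finset.range (j + 1), χ i + birkhoffSum T ψ (n - (j + 1)) (x', 0) := by
    conv_lhs => rw [← Nat.add_sub_cancel' hjn]
    rw [birkhoffSum_add, hT.iterate_zero_of_forall_le_of_lt hbelow hj,
      hT.birkhoffSum_zero_of_forall_le hψ fun m hm => hbelow m (by omega)]
  have hrest := ih (n - (j + 1)) (by omega) (by omega) x' hx'
  have hdrop' := hdrop j (by omega) (by linarith)
  rw [Nat.cast_sub hjn] at hrest
  push_cast at hrest hdrop'
  rw [hsplit, mul_add]
  linarith

end IsTowerMap

section Heights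

variable {a : ℕ → ℝ}

theorem exp_neg_le_of_lt_pow
    (ha : ∀ k l : ℕ, 8 ^ l ≤ k → k < 8 ^ (l + 1) → a k = Real.exp (-(8 : ℝ) ^ (l + 1)))
    {k l : ℕ} (hk0 : k ≠ 0) (hk : k < 8 ^ (l + 1)) : Real.exp (-(8 : ℝ) ^ (l + 1)) ≤ a k := by
  rw [ha k (Nat.log 8 k) (Nat.pow_log_le_self 8 hk0) (Nat.lt_pow_succ_log_self (by norm_num) k)]
  gcongr
  · norm_num
  · exact Nat.lt_succ_iff.1 (Nat.log_lt_of_lt_pow hk0 hk)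

theorem exists_eq_pow_of_lt
    (ha : ∀ k l : ℕ, 8 ^ l ≤ k → k < 8 ^ (l + 1) → a k = Real.exp (-(8 : ℝ) ^ (l + 1)))
    {j : ℕ} (h : a (j + 1) < a j) : ∃ l, j + 1 = 8 ^ l := by
  set l := Nat.log 8 (j + 1)
  have hl : 8 ^ l ≤ j + 1 := Nat.pow_log_le_self 8 j.succ_ne_zero
  have hl' : j + 1 < 8 ^ (l + 1) := Nat.lt_pow_succ_log_self (by norm_num) _
  refine ⟨l, by_contra fun hne => h.ne ?_⟩
  rw [ha _ l hl hl', ha j l (by omega) (by omega)]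

end Heights

def IsGoodHeight (k : ℕ) : Prop := ∃ l : ℕ, 8 ^ l ≤ k ∧ k < 2 * 8 ^ l

theorem isGoodHeight_iff {k l : ℕ} (hl : 8 ^ l ≤ k) (hk : k < 8 ^ (l + 1)) :
    IsGoodHeight k ↔ k < 2 * 8 ^ l := by
  refine ⟨fun ⟨j, hj, hkj⟩ => ?_, fun h => ⟨l, hl, h⟩⟩
  have hlj : l = j := by
    refine le_antisymm ?_ ?_
    · by_contra! h
      have : 8 ^ (j + 1) ≤ 8 ^ l := Nat.pow_le_pow_right (by norm_num) h
      rw [pow_succ] at this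
      omega
    · by_contra! h
      have : 8 ^ (l + 1) ≤ 8 ^ j := Nat.pow_le_pow_right (by norm_num) h
      omega
  rwa [hlj]

theorem Nat.count_lt_eq_min (c m : ℕ) : Nat.count (· < c) m = min m c := by
  induction m with
  | zero => simp
  | succ m ih => rw [Nat.count_succ, ih]; split_ifs <;> omega

theorem count_isGoodHeight_pow_add {l m : ℕ} (hm : m ≤ 7 * 8 ^ l) :
    Nat.count IsGoodHeight (8 ^ l + m) = Nat.count IsGoodHeight (8 ^ l) + min m (8 ^ l) := by
  have hblock : ∀ k < m, IsGoodHeight (8 ^ l + k) ↔ k < 8 ^ l := fun k hk => by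
    rw [isGoodHeight_iff (l := l) (by omega) (by rw [pow_succ]; omega)]
    omega
  rw [Nat.count_add, ← Nat.count_lt_eq_min]
  congr 1
  exact le_antisymm (Nat.count_mono_left fun k hk => (hblock k hk).1)
    (Nat.count_mono_left fun k hk => (hblock k hk).2)

theorem seven_mul_count_isGoodHeight_pow (j : ℕ) :
    7 * Nat.count IsGoodHeight (8 ^ j) + 1 = 8 ^ j := by
  induction j with
  | zero =>
    have : ¬ IsGoodHeight 0 := fun ⟨l, hl, _⟩ => (by positivity : 0 < 8 ^ l).not_ge hl
    simp [Nat.count_one, this]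
  | succ j ih =>
    have h := count_isGoodHeight_pow_add (l := j) le_rfl
    rw [show 8 ^ j + 7 * 8 ^ j = 8 ^ (j + 1) by ring] at h
    omega

theorem seven_mul_count_isGoodHeight_le {l t : ℕ} (ht : t ≤ 8 ^ (l + 1)) :
    7 * Nat.count IsGoodHeight t ≤ t + 6 * 8 ^ l := by
  have hpow := seven_mul_count_isGoodHeight_pow l
  rcases le_or_gt t (8 ^ l) with h | h
  · have := Nat.count_monotone IsGoodHeight h
    omega
  · obtain ⟨m, rfl⟩ := Nat.exists_eq_add_of_le h.le
    rw [count_isGoodHeight_pow_add (by rw [pow_succ] at ht; omega)]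
    omega

theorem sum_range_ite_isGoodHeight (t : ℕ) :
    ∑ i ∈ Finset.range t, (if IsGoodHeight i then 1 else 0 : ℝ) = Nat.count IsGoodHeight t := by
  rw [Finset.sum_boole, Nat.count_eq_card_filter_range]

section GoodHeightTower

variable {a : ℕ → ℝ} {T : ℝ × ℕ → ℝ × ℕ} {ψ : ℝ × ℕ → ℝ}

theorem seven_mul_birkhoffSum_le (ha0 : a 0 = 1)
    (ha : ∀ k l : ℕ, 8 ^ l ≤ k → k < 8 ^ (l + 1) → a k = Real.exp (-(8 : ℝ) ^ (l + 1)))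
    (hT : IsTowerMap a T) (hψ : ∀ x k, ψ (x, k) = if IsGoodHeight k then 1 else 0)
    {l n : ℕ} (hn : n ≤ 8 ^ (l + 1)) {x : ℝ} (hx : x ≤ 1) :
    7 * birkhoffSum T ψ n (x, 0) ≤ n + 6 * 8 ^ l := by
  refine hT.mul_birkhoffSum_le hψ ha0.ge (fun j _ hj => ?_) (fun t ht => ?_) n hn x hx
  · obtain ⟨l', hl'⟩ := exists_eq_pow_of_lt ha hj
    have := seven_mul_count_isGoodHeight_pow l'
    rw [sum_range_ite_isGoodHeight, hl']
    exact_mod_cast (by omega : 7 * Nat.count IsGoodHeight (8 ^ l') ≤ 8 ^ l')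
  · rw [sum_range_ite_isGoodHeight]
    exact_mod_cast seven_mul_count_isGoodHeight_le ht

theorem Ioc_subset_setOf_half_le_birkhoffSum_div
    (ha : ∀ k l : ℕ, 8 ^ l ≤ k → k < 8 ^ (l + 1) → a k = Real.exp (-(8 : ℝ) ^ (l + 1)))
    (hT : IsTowerMap a T) (hψ : ∀ x k, ψ (x, k) = if IsGoodHeight k then 1 else 0) (l : ℕ) :
    Set.Ioc (0 : ℝ) (a (8 ^ l)) ⊆
      {x : ℝ | x ∈ Set.Ioc (0 : ℝ) 1 ∧
        birkhoffSum T ψ (2 * 8 ^ l) (x, 0) / ((2 * 8 ^ l : ℕ) : ℝ) ≥ 1 / 2} := by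
  rintro x ⟨hx0, hx⟩
  have h8 : 8 ^ l < 8 ^ (l + 1) := Nat.pow_lt_pow_succ (by norm_num)
  rw [ha _ l le_rfl h8] at hx
  have hclimb : ∀ m, m + 1 < 2 * 8 ^ l → x ≤ a (m + 1) := fun m hm =>
    hx.trans (exp_neg_le_of_lt_pow ha m.succ_ne_zero (by rw [pow_succ] at h8 ⊢; omega))
  have hcount : 8 ^ l ≤ Nat.count IsGoodHeight (2 * 8 ^ l) := by
    rw [two_mul, count_isGoodHeight_pow_add (by omega)]
    omega
  refine ⟨⟨hx0, hx.trans (Real.exp_le_one_iff.2 (by simp))⟩, ?_⟩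
  rw [hT.birkhoffSum_zero_of_forall_le hψ hclimb, sum_range_ite_isGoodHeight, ge_iff_le,
    le_div_iff₀ (by positivity)]
  have : ((8 ^ l : ℕ) : ℝ) ≤ Nat.count IsGoodHeight (2 * 8 ^ l) := by exact_mod_cast hcount
  push_cast at this ⊢
  linarith

theorem ofReal_exp_le_volume_setOf_half_le_birkhoffSum_div
    (ha : ∀ k l : ℕ, 8 ^ l ≤ k → k < 8 ^ (l + 1) → a k = Real.exp (-(8 : ℝ) ^ (l + 1)))
    (hT : IsTowerMap a T) (hψ : ∀ x k, ψ (x, k) = if IsGoodHeight k then 1 else 0) (l : ℕ) :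
    ENNReal.ofReal (Real.exp (-(4 * ((2 * 8 ^ l : ℕ) : ℝ)))) ≤
      volume {x : ℝ | x ∈ Set.Ioc (0 : ℝ) 1 ∧
        birkhoffSum T ψ (2 * 8 ^ l) (x, 0) / ((2 * 8 ^ l : ℕ) : ℝ) ≥ 1 / 2} := by
  calc ENNReal.ofReal (Real.exp (-(4 * ((2 * 8 ^ l : ℕ) : ℝ))))
      = volume (Set.Ioc (0 : ℝ) (a (8 ^ l))) := by
        rw [Real.volume_Ioc, sub_zero, ha _ l le_rfl (Nat.pow_lt_pow_succ (by norm_num))]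
        push_cast
        ring_nf
    _ ≤ _ := measure_mono (Ioc_subset_setOf_half_le_birkhoffSum_div ha hT hψ l)

theorem setOf_birkhoffSum_div_gt_eq_empty (ha0 : a 0 = 1)
    (ha : ∀ k l : ℕ, 8 ^ l ≤ k → k < 8 ^ (l + 1) → a k = Real.exp (-(8 : ℝ) ^ (l + 1)))
    (hT : IsTowerMap a T) (hψ : ∀ x k, ψ (x, k) = if IsGoodHeight k then 1 else 0) (l : ℕ) :
    {x : ℝ | x ∈ Set.Ioc (0 : ℝ) 1 ∧
      birkhoffSum T ψ (8 ^ (l + 1)) (x, 0) / ((8 ^ (l + 1) : ℕ) : ℝ) > 7 / 16} = ∅ := by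
  refine Set.eq_empty_iff_forall_notMem.2 fun x ⟨⟨_, hx⟩, hgt⟩ => ?_
  have hle := seven_mul_birkhoffSum_le ha0 ha hT hψ (l := l) le_rfl hx
  rw [gt_iff_lt, lt_div_iff₀ (by positivity)] at hgt
  have : (0 : ℝ) < 8 ^ l := by positivity
  have h8 : (8 : ℝ) ^ (l + 1) = 8 * 8 ^ l := pow_succ' 8 l
  push_cast at hle hgt
  linarith

end GoodHeightTower

/-- For the tower of Statement 5 (`a_k = exp(−8^{l+1})` for
`8^l ≤ k < 8^{l+1}`) with the same observable `ψ`, one has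
`{x ∈ (0,1] : (1/(2·8^l)) S_{2·8^l}ψ(x,0) ≥ 1/2} ⊇ (0, a_{8^l}]` for every `l ≥ 0`, hence
`limsup (1/n) log m({x : (1/n)S_nψ(x,0) ≥ 1/2}) ≥ −4`; together with the liminf being
`−∞` at level `7/16`, no rate function `q` can satisfy both the lower large deviation
bound at level `7/16` and the upper bound at level `1/2`. -/
theorem stmt6 (a : ℕ → ℝ) (ha0 : a 0 = 1)
    (ha : ∀ k l : ℕ, 8 ^ l ≤ k → k < 8 ^ (l + 1) → a k = Real.exp (-(8 : ℝ) ^ (l + 1)))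
    (T : ℝ × ℕ → ℝ × ℕ)
    (hT : ∀ x : ℝ, ∀ k : ℕ, T (x, k) =
      if x ≤ a (k + 1) then (x, k + 1) else ((x - a (k + 1)) / (a k - a (k + 1)), 0))
    (ψ : ℝ × ℕ → ℝ)
    (hψ : ∀ x : ℝ, ∀ k : ℕ, ψ (x, k) =
      if ∃ l : ℕ, 8 ^ l ≤ k ∧ k < 2 * 8 ^ l then 1 else 0) :
    (∀ l : ℕ,
      Set.Ioc (0 : ℝ) (a (8 ^ l)) ⊆
        {x : ℝ | x ∈ Set.Ioc (0 : ℝ) 1 ∧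
          birkhoffSum' T ψ (2 * 8 ^ l) (x, 0) / ((2 * 8 ^ l : ℕ) : ℝ) ≥ 1 / 2}) ∧
    ((-4 : EReal) ≤ limsup (fun n : ℕ =>
      ENNReal.log (volume {x : ℝ | x ∈ Set.Ioc (0 : ℝ) 1 ∧
        birkhoffSum' T ψ n (x, 0) / (n : ℝ) ≥ 1 / 2}) / (n : EReal)) atTop) ∧
    ¬ ∃ q : ℝ → EReal,
      ((⨆ t ∈ Set.Ioi (7 / 16 : ℝ), q t) ≤ liminf (fun n : ℕ =>
        ENNReal.log (volume {x : ℝ | x ∈ Set.Ioc (0 : ℝ) 1 ∧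
          birkhoffSum' T ψ n (x, 0) / (n : ℝ) > 7 / 16}) / (n : EReal)) atTop) ∧
      (limsup (fun n : ℕ =>
        ENNReal.log (volume {x : ℝ | x ∈ Set.Ioc (0 : ℝ) 1 ∧
          birkhoffSum' T ψ n (x, 0) / (n : ℝ) ≥ 1 / 2}) / (n : EReal)) atTop ≤
        ⨆ t ∈ Set.Ici (1 / 2 : ℝ), q t) := by
  rw [birkhoffSum'_eq_birkhoffSum]
  have hupper : (-4 : EReal) ≤ _ :=
    le_limsup_log_div_of_frequently (c := 4) (u := fun n => volume
      {x : ℝ | x ∈ Set.Ioc (0 : ℝ) 1 ∧ birkhoffSum T ψ n (x, 0) / (n : ℝ) ≥ 1 / 2}) <|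
    frequently_atTop.2 fun N =>
      ⟨2 * 8 ^ N, by have := Nat.lt_pow_self (n := N) (show 1 < 8 by norm_num); omega,
        ofReal_exp_le_volume_setOf_half_le_birkhoffSum_div ha hT hψ N⟩
  have hlower := liminf_log_div_eq_bot_of_frequently_eq_zero (u := fun n => volume
      {x : ℝ | x ∈ Set.Ioc (0 : ℝ) 1 ∧ birkhoffSum T ψ n (x, 0) / (n : ℝ) > 7 / 16}) <|
    frequently_atTop.2 fun N =>
      ⟨8 ^ (N + 1), (Nat.lt_pow_self (show 1 < 8 by norm_num)).le.trans' (by omega), by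
        rw [setOf_birkhoffSum_div_gt_eq_empty ha0 ha hT hψ N, measure_empty]⟩
  refine ⟨Ioc_subset_setOf_half_le_birkhoffSum_div ha hT hψ, hupper,
    fun ⟨q, hq_lower, hq_upper⟩ => ?_⟩
  have : (-4 : EReal) ≤ ⊥ := hupper.trans <| hq_upper.trans <|
    (biSup_mono fun t (ht : 1 / 2 ≤ t) => by norm_num at ht ⊢; linarith).trans <|
    hq_lower.trans_eq hlower
  exact (EReal.bot_lt_coe (-4)).not_ge this
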